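/- arXiv:1306.6761 — 2 statements merged into one kernel-verified Lean document; each statement's English description precedes it below -/
import Mathlib

section
/- Suppose the probability measure μ on ℝ^d satisfies (H1) and L_μ(x) < ∞ for all x ∈ ℝ^d. Then condition (H2) holds if and only if the support of μ is not contained in any half-space u⁻ = {y ∈ ℝ^d : ⟨u,y⟩ ≤ 0} with u ∈ K* \ {0}. -/
/-!
If `μ` gives full mass to a half-space `u⁻` with `u ∈ K* \ {0}`, then moving from any point of
`K*` in the direction `u` stays in `K*` and strictly decreases `L_μ`, because (H1) makes
`⟪u, y⟫ < 0` on a set of positive measure; so `L_μ` has no local minimum on `K*`.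

Conversely, if no such half-space carries all the mass, the lower semicontinuous function
`u ↦ ∫ min(1, ⟪u, y⟫⁺) dμ` is positive on the compact set `K* ∩ S^{d-1}`, hence bounded below
there by some `m > 0`. As `e^s ≥ s`, this gives `L_μ(z) ≥ m ‖z‖` on `K*`, so `L_μ`, which is
lower semicontinuous by Fatou's lemma, is coercive on the closed cone `K*` and attains a global
minimum there.
-/

open MeasureTheory ProbabilityTheory Filter
open scoped ENNReal RealInnerProductSpace Topology

noncomputable def laplace {d : ℕ} (μ : Measure (EuclideanSpace ℝ (Fin d)))
    (x : EuclideanSpace ℝ (Fin d)) : ℝ≥0∞ :=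
  ∫⁻ y, ENNReal.ofReal (Real.exp ⟪x, y⟫) ∂μ

def dualCone {d : ℕ} (K : Set (EuclideanSpace ℝ (Fin d))) : Set (EuclideanSpace ℝ (Fin d)) :=
  {z | ∀ x ∈ K, 0 ≤ ⟪x, z⟫}

theorem LowerSemicontinuousOn.exists_isMinOn' {α β : Type*} [TopologicalSpace α]
    [LinearOrder β] {s : Set α} {f : α → β} (hf : LowerSemicontinuousOn f s) (hsc : IsClosed s)
    {x₀ : α} (h₀ : x₀ ∈ s) (hc : ∀ᶠ x in cocompact α ⊓ 𝓟 s, f x₀ ≤ f x) :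
    ∃ x ∈ s, IsMinOn f s x := by
  rcases (hasBasis_cocompact.inf_principal _).eventually_iff.1 hc with ⟨K, hK, hKf⟩
  have hsub : insert x₀ (K ∩ s) ⊆ s := Set.insert_subset_iff.2 ⟨h₀, Set.inter_subset_right⟩
  obtain ⟨x, hx, hxf⟩ := (hf.mono hsub).exists_isMinOn (Set.insert_nonempty _ _)
    ((hK.inter_right hsc).insert x₀)
  refine ⟨x, hsub hx, fun y hy => ?_⟩
  by_cases hyK : y ∈ K
  exacts [hxf (Or.inr ⟨hyK, hy⟩), (hxf (Or.inl rfl)).trans (hKf ⟨hyK, hy⟩)]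

theorem lowerSemicontinuous_lintegral {X α : Type*} [TopologicalSpace X]
    [FirstCountableTopology X] [MeasurableSpace α] {μ : Measure α} {f : X → α → ℝ≥0∞}
    (hf_meas : ∀ x, Measurable (f x)) (hf : ∀ a, LowerSemicontinuous (f · a)) :
    LowerSemicontinuous fun x => ∫⁻ a, f x a ∂μ := by
  refine lowerSemicontinuous_iff_le_liminf.2 fun x => ?_
  calc ∫⁻ a, f x a ∂μ ≤ ∫⁻ a, liminf (f · a) (𝓝 x) ∂μ :=
        lintegral_mono fun a => LowerSemicontinuousAt.le_liminf (hf a x)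
    _ ≤ liminf (fun y => ∫⁻ a, f y a ∂μ) (𝓝 x) := lintegral_liminf_le hf_meas

theorem exists_pos_add_smul_mem {E : Type*} [NormedAddCommGroup E] [NormedSpace ℝ E] {V : Set E}
    (hV : IsOpen V) {x : E} (hx : x ∈ V) (u : E) : ∃ t : ℝ, 0 < t ∧ x + t • u ∈ V := by
  have hray : Tendsto (fun t : ℝ => x + t • u) (𝓝[>] 0) (𝓝 x) :=
    ((by fun_prop : Continuous fun t : ℝ => x + t • u).tendsto' 0 x (by simp)).mono_left
      nhdsWithin_le_nhds
  obtain ⟨t, htV, ht⟩ := ((hray.eventually (hV.mem_nhds hx)).and self_mem_nhdsWithin).exists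
  exact ⟨t, ht, htV⟩

theorem measure_lt_one_iff_not_ae {α : Type*} [MeasurableSpace α] {μ : Measure α}
    [IsProbabilityMeasure μ] {p : α → Prop} (hp : NullMeasurableSet {a | p a} μ) :
    μ {a | p a} < 1 ↔ ¬∀ᵐ a ∂μ, p a := by
  rw [ae_iff_measure_eq hp, measure_univ, lt_iff_le_and_ne]
  exact and_iff_right prob_le_one

section Cone

variable {d : ℕ} {K : Set (EuclideanSpace ℝ (Fin d))}

theorem dualCone_eq_innerDual : dualCone K = ProperCone.innerDual K := rfl

theorem isClosed_dualCone : IsClosed (dualCone K) := by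
  rw [dualCone_eq_innerDual]
  exact (ProperCone.innerDual K).isClosed

theorem zero_mem_dualCone : 0 ∈ dualCone K := by
  rw [dualCone_eq_innerDual]
  exact zero_mem _

theorem smul_mem_dualCone {c : ℝ} (hc : 0 ≤ c) {z : EuclideanSpace ℝ (Fin d)}
    (hz : z ∈ dualCone K) : c • z ∈ dualCone K := fun x hx => by
  rw [real_inner_smul_right]
  exact mul_nonneg hc (hz x hx)

theorem add_mem_dualCone {z w : EuclideanSpace ℝ (Fin d)} (hz : z ∈ dualCone K)
    (hw : w ∈ dualCone K) : z + w ∈ dualCone K := fun x hx => by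
  rw [inner_add_right]
  exact add_nonneg (hz x hx) (hw x hx)

end Cone

section ClippedMoment

variable {E : Type*} [NormedAddCommGroup E] [InnerProductSpace ℝ E] [MeasurableSpace E]
  {μ : Measure E}

/-- `ENNReal.ofReal` truncates at `0`, so this is `∫ min(1, ⟪u, y⟫⁺) dμ`. -/
noncomputable def clippedMoment (μ : Measure E) (u : E) : ℝ≥0∞ :=
  ∫⁻ y, ENNReal.ofReal (min 1 ⟪u, y⟫) ∂μ

theorem lowerSemicontinuous_clippedMoment [OpensMeasurableSpace E] [FirstCountableTopology E] :
    LowerSemicontinuous (clippedMoment μ) := by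
  have hcont : Continuous fun p : E × E => ENNReal.ofReal (min 1 ⟪p.1, p.2⟫) :=
    ENNReal.continuous_ofReal.comp (by fun_prop)
  exact lowerSemicontinuous_lintegral
    (fun u => (hcont.comp (Continuous.prodMk_right u)).measurable)
    (fun y => (hcont.comp (Continuous.prodMk_left y)).lowerSemicontinuous)

theorem clippedMoment_pos [OpensMeasurableSpace E] {u : E} (hu : ¬∀ᵐ y ∂μ, ⟪u, y⟫ ≤ 0) :
    0 < clippedMoment μ u := by
  have hmeas : Measurable fun y => ENNReal.ofReal (min 1 ⟪u, y⟫) :=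
    ENNReal.measurable_ofReal.comp (by fun_prop)
  have hsupp :
      Function.support (fun y => ENNReal.ofReal (min 1 ⟪u, y⟫)) = {y | ¬⟪u, y⟫ ≤ 0} := by
    ext y
    simp [Function.mem_support]
  rw [clippedMoment, lintegral_pos_iff_support hmeas, hsupp, pos_iff_ne_zero]
  rwa [ae_iff] at hu

theorem clippedMoment_lt_top [IsFiniteMeasure μ] (u : E) : clippedMoment μ u < ∞ :=
  calc clippedMoment μ u ≤ ∫⁻ _, 1 ∂μ :=
        lintegral_mono fun y => ENNReal.ofReal_le_one.2 (min_le_left _ _)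
    _ < ∞ := by simp

theorem IsCompact.exists_pos_forall_le_clippedMoment [OpensMeasurableSpace E]
    [FirstCountableTopology E] [IsFiniteMeasure μ]
    {S : Set E} (hS : IsCompact S) (h : ∀ u ∈ S, ¬∀ᵐ y ∂μ, ⟪u, y⟫ ≤ 0) :
    ∃ m : ℝ, 0 < m ∧ ∀ u ∈ S, ENNReal.ofReal m ≤ clippedMoment μ u := by
  rcases S.eq_empty_or_nonempty with rfl | hne
  · exact ⟨1, one_pos, by simp⟩
  obtain ⟨u₀, hu₀, hmin⟩ :=
    (lowerSemicontinuous_clippedMoment.lowerSemicontinuousOn S).exists_isMinOn hne hS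
  refine ⟨(clippedMoment μ u₀).toReal,
    ENNReal.toReal_pos (clippedMoment_pos (h u₀ hu₀)).ne' (clippedMoment_lt_top u₀).ne,
    fun u hu => ?_⟩
  rw [ENNReal.ofReal_toReal (clippedMoment_lt_top u₀).ne]
  exact hmin hu

end ClippedMoment

section Laplace

variable {d : ℕ} {μ : Measure (EuclideanSpace ℝ (Fin d))}

theorem measurable_exp_inner (x : EuclideanSpace ℝ (Fin d)) :
    Measurable fun y : EuclideanSpace ℝ (Fin d) => ENNReal.ofReal (Real.exp ⟪x, y⟫) :=
  ENNReal.measurable_ofReal.comp (by fun_prop)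

theorem lowerSemicontinuous_laplace : LowerSemicontinuous (laplace μ) :=
  lowerSemicontinuous_lintegral measurable_exp_inner fun y =>
    (ENNReal.continuous_ofReal.comp (by fun_prop)).lowerSemicontinuous

theorem laplace_zero [IsProbabilityMeasure μ] : laplace μ 0 = 1 := by
  simp [laplace]

theorem ofReal_mul_clippedMoment_le_laplace {s : ℝ} (hs : 0 ≤ s) (u : EuclideanSpace ℝ (Fin d)) :
    ENNReal.ofReal s * clippedMoment μ u ≤ laplace μ (s • u) := by
  rw [clippedMoment, ← lintegral_const_mul' _ _ ENNReal.ofReal_ne_top]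
  refine lintegral_mono fun y => ?_
  rw [← ENNReal.ofReal_mul hs, real_inner_smul_left]
  refine ENNReal.ofReal_le_ofReal ?_
  calc s * min 1 ⟪u, y⟫ ≤ s * ⟪u, y⟫ := mul_le_mul_of_nonneg_left (min_le_right _ _) hs
    _ ≤ s * ⟪u, y⟫ + 1 := le_add_of_nonneg_right zero_le_one
    _ ≤ Real.exp (s * ⟪u, y⟫) := Real.add_one_le_exp _

theorem eventually_one_le_laplace [IsFiniteMeasure μ] {K : Set (EuclideanSpace ℝ (Fin d))}
    (h : ∀ u ∈ dualCone K, u ≠ 0 → ¬∀ᵐ y ∂μ, ⟪u, y⟫ ≤ 0) :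
    ∀ᶠ z in cocompact _ ⊓ 𝓟 (dualCone K), 1 ≤ laplace μ z := by
  obtain ⟨m, hm, hle⟩ :=
    ((isCompact_sphere 0 1).inter_left isClosed_dualCone).exists_pos_forall_le_clippedMoment
      (μ := μ) fun u hu => h u hu.1 (ne_zero_of_mem_unit_sphere ⟨u, hu.2⟩)
  filter_upwards [(tendsto_norm_cocompact_atTop.eventually_ge_atTop m⁻¹).filter_mono inf_le_left,
    mem_inf_of_right (mem_principal_self _)] with z hz hzK
  have hz0 : 0 < ‖z‖ := (inv_pos.2 hm).trans_le hz
  have hu : ‖z‖⁻¹ • z ∈ dualCone K ∩ Metric.sphere 0 1 :=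
    ⟨smul_mem_dualCone (inv_nonneg.2 hz0.le) hzK, by simp [norm_smul, hz0.ne']⟩
  calc 1 ≤ ENNReal.ofReal ‖z‖ * ENNReal.ofReal m := by
        rw [← ENNReal.ofReal_mul (norm_nonneg _), ENNReal.one_le_ofReal]
        rwa [inv_le_iff_one_le_mul₀ hm] at hz
    _ ≤ ENNReal.ofReal ‖z‖ * clippedMoment μ (‖z‖⁻¹ • z) := by gcongr; exact hle _ hu
    _ ≤ laplace μ (‖z‖ • ‖z‖⁻¹ • z) := ofReal_mul_clippedMoment_le_laplace (norm_nonneg _) _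
    _ = laplace μ z := by rw [smul_inv_smul₀ hz0.ne']

theorem laplace_add_smul_lt {x u : EuclideanSpace ℝ (Fin d)} (hx : laplace μ x ≠ ∞)
    (hu_nonpos : ∀ᵐ y ∂μ, ⟪u, y⟫ ≤ 0) (hu_ne : ¬∀ᵐ y ∂μ, ⟪u, y⟫ = 0) {t : ℝ} (ht : 0 < t) :
    laplace μ (x + t • u) < laplace μ x := by
  have hle : (fun y => ENNReal.ofReal (Real.exp ⟪x + t • u, y⟫)) ≤ᵐ[μ]
      fun y => ENNReal.ofReal (Real.exp ⟪x, y⟫) := by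
    filter_upwards [hu_nonpos] with y hy
    rw [inner_add_left, real_inner_smul_left]
    exact ENNReal.ofReal_le_ofReal (Real.exp_le_exp.2 (by nlinarith))
  refine lintegral_strict_mono_of_ae_le_of_frequently_ae_lt (measurable_exp_inner x).aemeasurable
    ((lintegral_mono_ae hle).trans_lt hx.lt_top).ne hle ?_
  refine (not_eventually.1 hu_ne).mono fun y hy => ?_
  rw [inner_add_left, real_inner_smul_left, Ne,
    ENNReal.ofReal_eq_ofReal_iff (Real.exp_pos _).le (Real.exp_pos _).le, Real.exp_eq_exp]
  exact fun h => hy ((mul_eq_zero.1 (by linarith)).resolve_left ht.ne')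

end Laplace

theorem H2_iff_support_not_in_halfspace_general
    {d : ℕ}
    (K : Set (EuclideanSpace ℝ (Fin d)))
    (μ : Measure (EuclideanSpace ℝ (Fin d))) [IsProbabilityMeasure μ]
    -- (H1)
    (hH1 : ∀ u : EuclideanSpace ℝ (Fin d), u ≠ 0 → μ {y | ⟪u, y⟫ = 0} < 1)
    -- all exponential moments
    (hfin : ∀ x : EuclideanSpace ℝ (Fin d), laplace μ x < ⊤) :
    (∃ xstar ∈ dualCone K, ∃ V : Set (EuclideanSpace ℝ (Fin d)),
        IsOpen V ∧ xstar ∈ V ∧ (∀ z ∈ V, laplace μ z < ⊤) ∧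
        ∀ z ∈ dualCone K ∩ V, laplace μ xstar ≤ laplace μ z) ↔
      ∀ u ∈ dualCone K, u ≠ 0 → μ {y | ⟪u, y⟫ ≤ 0} < 1 := by
  have hhalf (u : EuclideanSpace ℝ (Fin d)) :
      μ {y | ⟪u, y⟫ ≤ 0} < 1 ↔ ¬∀ᵐ y ∂μ, ⟪u, y⟫ ≤ 0 :=
    measure_lt_one_iff_not_ae (measurableSet_le (by fun_prop) measurable_const).nullMeasurableSet
  constructor
  · rintro ⟨x, hxK, V, hV, hxV, -, hmin⟩ u huK hu0
    rw [hhalf]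
    intro hu_nonpos
    have hu_ne : ¬∀ᵐ y ∂μ, ⟪u, y⟫ = 0 := (measure_lt_one_iff_not_ae
      (measurableSet_eq_fun (by fun_prop) measurable_const).nullMeasurableSet).1 (hH1 u hu0)
    obtain ⟨t, ht, htV⟩ := exists_pos_add_smul_mem hV hxV u
    exact (hmin _ ⟨add_mem_dualCone hxK (smul_mem_dualCone ht.le huK), htV⟩).not_gt
      (laplace_add_smul_lt (hfin x).ne hu_nonpos hu_ne ht)
  · intro h
    have hcoercive : ∀ᶠ z in cocompact _ ⊓ 𝓟 (dualCone K), laplace μ 0 ≤ laplace μ z := by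
      rw [laplace_zero]
      exact eventually_one_le_laplace fun u hu hu0 => (hhalf u).1 (h u hu hu0)
    obtain ⟨x, hxK, hmin⟩ := (lowerSemicontinuous_laplace.lowerSemicontinuousOn _).exists_isMinOn'
      isClosed_dualCone zero_mem_dualCone hcoercive
    exact ⟨x, hxK, Set.univ, isOpen_univ, trivial, fun z _ => hfin z, fun z hz => hmin hz.1⟩

/-- **Geometric interpretation of (H2)**: for a measure `μ` satisfying (H1) and with all
exponential moments, condition (H2) (existence of a local minimum point of `L_μ` on `K*`)
holds if and only if the support of `μ` is not contained in any half-space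
`u⁻ = {y : ⟨u,y⟩ ≤ 0}` with `u ∈ K* \ {0}` (equivalently, `μ(u⁻) < 1` for all such `u`). -/
theorem H2_iff_support_not_in_halfspace
    {d : ℕ} (hd : 1 ≤ d)
    (K : Set (EuclideanSpace ℝ (Fin d)))
    (hKclosed : IsClosed K) (hKconvex : Convex ℝ K)
    (hKcone : ∀ c : ℝ, 0 ≤ c → ∀ x ∈ K, c • x ∈ K)
    (hKint : (interior K).Nonempty)
    (μ : Measure (EuclideanSpace ℝ (Fin d))) [IsProbabilityMeasure μ]
    -- (H1)
    (hH1 : ∀ u : EuclideanSpace ℝ (Fin d), u ≠ 0 → μ {y | ⟪u, y⟫ = 0} < 1)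
    -- all exponential moments
    (hfin : ∀ x : EuclideanSpace ℝ (Fin d), laplace μ x < ⊤) :
    (∃ xstar ∈ dualCone K, ∃ V : Set (EuclideanSpace ℝ (Fin d)),
        IsOpen V ∧ xstar ∈ V ∧ (∀ z ∈ V, laplace μ z < ⊤) ∧
        ∀ z ∈ dualCone K ∩ V, laplace μ xstar ≤ laplace μ z) ↔
      ∀ u ∈ dualCone K, u ≠ 0 → μ {y | ⟪u, y⟫ ≤ 0} < 1 :=
  H2_iff_support_not_in_halfspace_general K μ hH1 hfin
end

section
/- Let μ be a square-integrable probability measure on ℝ^d satisfying (H1) whose mean m belongs to the cone K. Then there exist an integer k ≥ 1 and δ ≥ 0 such that P_μ^0[τ_{K_{-δ}} > k and S_k ∈ int(K)] > 0. -/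
/-!
If no point of `interior K` were a convex combination of points of `supp μ`, Hahn–Banach would
give a nonzero functional `f` with `f ≤ 0` on `K` and `f ≥ 0` on `supp μ`. Since
`f m = ∫ f dμ ≤ 0`, `f` vanishes `μ`-a.e., so `μ` lives on the hyperplane `ker f`, against (H1).
Rescaling such a convex combination and rounding the weights up turns it into a sum
`c₀ + ⋯ + c_{k-1}` of support points lying in the open cone `interior K`. With positive
probability every increment `X j` falls into a small ball around `c j`; then `S_k ∈ interior K`,
and the partial sums stay bounded, so a large shift `δ • v` pushes all of them into `K`.
-/

open MeasureTheory ProbabilityTheory Filter Finset Metric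
open scoped RealInnerProductSpace Topology Pointwise

section Cone

variable {E : Type*} {K : Set E}

lemma smul_mem_interior_of_cone [AddCommGroup E] [TopologicalSpace E] [Module ℝ E]
    [ContinuousConstSMul ℝ E] (hK : ∀ c : ℝ, 0 ≤ c → ∀ x ∈ K, c • x ∈ K)
    {t : ℝ} (ht : 0 < t) {x : E} (hx : x ∈ interior K) : t • x ∈ interior K := by
  have : t • x ∈ interior (t • K) := by
    rw [interior_smul₀ ht.ne']
    exact Set.smul_mem_smul_set hx
  refine interior_mono ?_ this
  rintro _ ⟨y, hy, rfl⟩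
  exact hK t ht.le y hy

variable [NormedAddCommGroup E] [NormedSpace ℝ E]

lemma exists_closedBall_subset_image_add_smul_of_cone
    (hK : ∀ c : ℝ, 0 ≤ c → ∀ x ∈ K, c • x ∈ K) {v : E} (hv : v ∈ interior K) (B : ℝ) :
    ∃ δ : ℝ, 0 ≤ δ ∧ closedBall (0 : E) B ⊆ (· + (-δ) • v) '' K := by
  have hV : (· + v) ⁻¹' K ∈ 𝓝 (0 : E) :=
    (continuous_add_const v).continuousAt.preimage_mem_nhds
      (by simpa using mem_interior_iff_mem_nhds.1 hv)
  obtain ⟨r, hr, hrB⟩ := (NormedSpace.isVonNBounded_closedBall ℝ E B hV).exists_pos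
  refine ⟨r, hr.le, fun x hx => ?_⟩
  obtain ⟨y, hy, rfl⟩ := hrB r (by rw [Real.norm_of_nonneg hr.le]) hx
  refine ⟨r • (y + v), hK r hr.le _ hy, ?_⟩
  simp only [smul_add, neg_smul, add_neg_cancel_right]

lemma exists_clm_nonpos_on_cone_nonneg_on_of_disjoint (hKconv : Convex ℝ K)
    (hK : ∀ c : ℝ, 0 ≤ c → ∀ x ∈ K, c • x ∈ K) (hKint : (interior K).Nonempty)
    {S : Set E} (hS : Convex ℝ S) (hSne : S.Nonempty) (hdisj : Disjoint (interior K) S) :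
    ∃ f : E →L[ℝ] ℝ, f ≠ 0 ∧ (∀ x ∈ K, f x ≤ 0) ∧ ∀ y ∈ S, 0 ≤ f y := by
  obtain ⟨f, u, hfK, hfS⟩ := geometric_hahn_banach_open hKconv.interior isOpen_interior hS hdisj
  have hle : ∀ x ∈ K, f x ≤ u := by
    have hcl : K ⊆ closure (interior K) := by
      rw [hKconv.closure_interior_eq_closure_of_nonempty_interior hKint]
      exact subset_closure
    exact fun x hx => closure_minimal (fun y hy => (hfK y hy).le)
      (isClosed_le f.continuous continuous_const) (hcl hx)
  obtain ⟨w, hw⟩ := hKint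
  have hu : 0 ≤ u := by simpa using hle 0 (by simpa using hK 0 le_rfl w (interior_subset hw))
  refine ⟨f, ?_, fun x hx => ?_, fun y hy => hu.trans (hfS y hy)⟩
  · rintro rfl
    obtain ⟨y, hy⟩ := hSne
    have hlt := hfK w hw
    have hge := hfS y hy
    simp only [zero_apply] at hlt hge
    linarith
  · by_contra! hpos
    have := hle _ (hK ((u + 1) / f x) (by positivity) x hx)
    rw [map_smul, smul_eq_mul, div_mul_cancel₀ _ hpos.ne'] at this
    linarith

end Cone

lemma ContinuousLinearMap.ae_eq_zero_of_ae_nonneg_of_apply_integral_nonpos {E : Type*}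
    [NormedAddCommGroup E] [NormedSpace ℝ E] [CompleteSpace E] [MeasurableSpace E] {μ : Measure E}
    (hid : Integrable id μ) {f : E →L[ℝ] ℝ} (hf : 0 ≤ᵐ[μ] f) (hfm : f (∫ y, y ∂μ) ≤ 0) :
    f =ᵐ[μ] 0 := by
  refine (integral_eq_zero_iff_of_nonneg_ae hf (f.integrable_comp hid)).1 (le_antisymm ?_ ?_)
  · exact (f.integral_comp_comm hid).trans_le hfm
  · exact integral_nonneg_of_ae hf

section Support

variable {E : Type*} [NormedAddCommGroup E] [InnerProductSpace ℝ E] [CompleteSpace E]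
  [MeasurableSpace E] [BorelSpace E] {μ : Measure E}

lemma ContinuousLinearMap.eq_zero_of_ae_eq_zero [IsProbabilityMeasure μ]
    (hH1 : ∀ u : E, u ≠ 0 → μ {y | ⟪u, y⟫ = 0} < 1) {f : E →L[ℝ] ℝ} (hf : f =ᵐ[μ] 0) :
    f = 0 := by
  by_contra hf0
  set u := (InnerProductSpace.toDual ℝ E).symm f
  have hu : u ≠ 0 := by simpa [u] using hf0
  have hfull : μ {y | ⟪u, y⟫ = 0} = 1 := by
    have hmeas : MeasurableSet {y | ⟪u, y⟫ = 0} :=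
      measurableSet_eq_fun (by fun_prop) measurable_const
    refine ((ae_iff_measure_eq hmeas.nullMeasurableSet).1 ?_).trans measure_univ
    filter_upwards [hf] with y hy
    simpa [u] using hy
  exact (hH1 u hu).ne hfull

variable [SecondCountableTopology E]

theorem exists_mem_interior_inter_convexHull_support {K : Set E} (hKconv : Convex ℝ K)
    (hK : ∀ c : ℝ, 0 ≤ c → ∀ x ∈ K, c • x ∈ K) (hKint : (interior K).Nonempty)
    [IsProbabilityMeasure μ] (hid : Integrable id μ)
    (hH1 : ∀ u : E, u ≠ 0 → μ {y | ⟪u, y⟫ = 0} < 1) (hmK : (∫ y, y ∂μ) ∈ K) :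
    (interior K ∩ convexHull ℝ μ.support).Nonempty := by
  by_contra hempty
  rw [Set.not_nonempty_iff_eq_empty, ← Set.disjoint_iff_inter_eq_empty] at hempty
  obtain ⟨f, hf0, hfK, hfS⟩ := exists_clm_nonpos_on_cone_nonneg_on_of_disjoint hKconv hK hKint
    (convex_convexHull ℝ _) (Measure.nonempty_support (IsProbabilityMeasure.ne_zero μ)).convexHull
    hempty
  have hfpos : 0 ≤ᵐ[μ] f := by
    filter_upwards [Measure.support_mem_ae] with y hy using hfS y (subset_convexHull ℝ _ hy)
  exact hf0 (f.eq_zero_of_ae_eq_zero hH1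
    (f.ae_eq_zero_of_ae_nonneg_of_apply_integral_nonpos hid hfpos (hfK _ hmK)))

end Support

lemma Finset.exists_seq_sum_range_eq_sum_nsmul {M : Type*} [AddCommMonoid M] (t : Finset M)
    (n : M → ℕ) :
    ∃ c : ℕ → M, (∀ j < ∑ y ∈ t, n y, c j ∈ t) ∧
      ∑ j ∈ range (∑ y ∈ t, n y), c j = ∑ y ∈ t, n y • y := by
  classical
  induction t using Finset.induction_on with
  | empty => exact ⟨0, by simp, by simp⟩
  | insert a s ha ih =>
    obtain ⟨c, hcs, hc⟩ := ih
    refine ⟨fun j => if j < n a then a else c (j - n a), fun j hj => ?_, ?_⟩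
    · rw [sum_insert ha] at hj
      dsimp only
      split_ifs with h
      · exact mem_insert_self a s
      · exact mem_insert_of_mem (hcs _ (by omega))
    · rw [sum_insert ha, sum_insert ha, sum_range_add, ← hc]
      congr 1
      · rw [sum_congr rfl fun j hj => if_pos (mem_range.1 hj), sum_const, card_range]
      · simp

lemma exists_sum_nsmul_mem_of_mem_convexHull {E : Type*} [NormedAddCommGroup E]
    [NormedSpace ℝ E] {U S : Set E} (hU : IsOpen U) (hUcone : ∀ t : ℝ, 0 < t → ∀ x ∈ U, t • x ∈ U)
    {p : E} (hpU : p ∈ U) (hpS : p ∈ convexHull ℝ S) :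
    ∃ (t : Finset E) (n : E → ℕ), ↑t ⊆ S ∧ 0 < ∑ y ∈ t, n y ∧ ∑ y ∈ t, n y • y ∈ U := by
  rw [convexHull_eq_union_convexHull_finite_subsets, Set.mem_iUnion₂] at hpS
  obtain ⟨t, htS, hpt⟩ := hpS
  obtain ⟨w, hw0, hw1, rfl⟩ := Finset.mem_convexHull'.1 hpt
  -- `⌈N w⌉₊ / N → w`, so for large `N` the rescaled integer combination lies in `U`
  have hlim : Tendsto (fun N : ℕ => ∑ y ∈ t, ((⌈w y * N⌉₊ : ℝ) / N) • y) atTop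
      (𝓝 (∑ y ∈ t, w y • y)) :=
    tendsto_finsetSum _ fun y hy =>
      ((tendsto_nat_ceil_mul_div_atTop (hw0 y hy)).comp tendsto_natCast_atTop_atTop).smul_const y
  obtain ⟨N, hNU, hN⟩ := ((hlim.eventually (hU.mem_nhds hpU)).and (eventually_gt_atTop 0)).exists
  have hNpos : (0 : ℝ) < N := by exact_mod_cast hN
  refine ⟨t, fun y => ⌈w y * N⌉₊, htS, ?_, ?_⟩
  · have : (N : ℝ) ≤ ∑ y ∈ t, (⌈w y * N⌉₊ : ℝ) :=
      calc (N : ℝ) = ∑ y ∈ t, w y * N := by rw [← sum_mul, hw1, one_mul]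
        _ ≤ _ := sum_le_sum fun y _ => Nat.le_ceil _
    exact_mod_cast hNpos.trans_le this
  · convert hUcone N hNpos _ hNU using 1
    rw [smul_sum]
    refine sum_congr rfl fun y _ => ?_
    rw [smul_smul, mul_div_cancel₀ _ hNpos.ne', Nat.cast_smul_eq_nsmul]

section Perturbation

variable {E : Type*} [SeminormedAddCommGroup E]

lemma exists_forall_dist_lt_sum_range_mem {U : Set E} (hU : IsOpen U) {c : ℕ → E} {k : ℕ}
    (hc : ∑ j ∈ range k, c j ∈ U) :
    ∃ ε > 0, ∀ x : ℕ → E, (∀ j < k, dist (x j) (c j) < ε) → ∑ j ∈ range k, x j ∈ U := by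
  obtain ⟨r, hr, hrU⟩ := Metric.isOpen_iff.1 hU _ hc
  refine ⟨r / (k + 1), by positivity, fun x hx => hrU ?_⟩
  calc dist (∑ j ∈ range k, x j) (∑ j ∈ range k, c j)
      ≤ ∑ j ∈ range k, dist (x j) (c j) := dist_sum_sum_le _ _ _
    _ ≤ ∑ _j ∈ range k, r / (k + 1) := sum_le_sum fun j hj => (hx j (mem_range.1 hj)).le
    _ = k / (k + 1) * r := by rw [sum_const, card_range, nsmul_eq_mul]; ring
    _ < r := mul_lt_of_lt_one_left hr ((div_lt_one (by positivity)).2 (lt_add_one _))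

lemma norm_sum_range_le_of_dist_lt {c x : ℕ → E} {k : ℕ} {ε : ℝ}
    (hx : ∀ j < k, dist (x j) (c j) < ε) {m : ℕ} (hm : m ≤ k) :
    ‖∑ j ∈ range m, x j‖ ≤ ∑ j ∈ range k, (‖c j‖ + ε) :=
  calc ‖∑ j ∈ range m, x j‖ ≤ ∑ j ∈ range m, ‖x j‖ := norm_sum_le _ _
    _ ≤ ∑ j ∈ range m, (‖c j‖ + ε) := sum_le_sum fun j hj =>
        norm_le_norm_add_const_of_dist_le (hx j ((mem_range.1 hj).trans_le hm)).le
    _ ≤ ∑ j ∈ range k, (‖c j‖ + ε) := sum_le_sum_of_subset_of_nonneg (range_subset_range.2 hm)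
        fun j hj _ => add_nonneg (norm_nonneg _) (dist_nonneg.trans (hx j (mem_range.1 hj)).le)

end Perturbation

lemma ProbabilityTheory.iIndepFun.measure_biInter_preimage_pos {ι Ω β : Type*} [MeasurableSpace Ω]
    [MeasurableSpace β] {P : Measure Ω} {X : ι → Ω → β} (hX : iIndepFun X P) {S : Finset ι}
    {s : ι → Set β} (hs : ∀ i ∈ S, MeasurableSet (s i)) (hpos : ∀ i ∈ S, 0 < P (X i ⁻¹' s i)) :
    0 < P (⋂ i ∈ S, X i ⁻¹' s i) := by
  rw [hX.meas_biInter fun i hi => ⟨s i, hs i hi, rfl⟩]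
  exact CanonicallyOrderedAdd.prod_pos.2 hpos

theorem walk_reaches_interior_with_positive_probability_general
    {d : ℕ}
    (K : Set (EuclideanSpace ℝ (Fin d)))
    (hKconvex : Convex ℝ K)
    (hKcone : ∀ c : ℝ, 0 ≤ c → ∀ x ∈ K, c • x ∈ K)
    (v : EuclideanSpace ℝ (Fin d)) (hv : v ∈ interior K)
    (μ : Measure (EuclideanSpace ℝ (Fin d))) [IsProbabilityMeasure μ]
    -- square integrability
    (hsq : Integrable (fun y : EuclideanSpace ℝ (Fin d) => ‖y‖ ^ 2) μ)
    -- (H1)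
    (hH1 : ∀ u : EuclideanSpace ℝ (Fin d), u ≠ 0 → μ {y | ⟪u, y⟫ = 0} < 1)
    -- the drift belongs to K
    (hmK : (∫ y, y ∂μ) ∈ K)
    -- the random walk
    (Ω : Type) [MeasurableSpace Ω] (P : Measure Ω) [IsProbabilityMeasure P]
    (X : ℕ → Ω → EuclideanSpace ℝ (Fin d))
    (hXmeas : ∀ n, Measurable (X n))
    (hXindep : iIndepFun X P)
    (hXlaw : ∀ n, Measure.map (X n) P = μ) :
    ∃ k : ℕ, 1 ≤ k ∧ ∃ δ : ℝ, 0 ≤ δ ∧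
      0 < P {ω | (∀ j : ℕ, 1 ≤ j → j ≤ k →
            (∑ i ∈ Finset.range j, X i ω) ∈ (· + (-δ) • v) '' K) ∧
          (∑ i ∈ Finset.range k, X i ω) ∈ interior K} := by
  have hid : Integrable id μ :=
    ((memLp_two_iff_integrable_sq_norm aestronglyMeasurable_id).2 hsq).integrable one_le_two
  obtain ⟨p, hpK, hpS⟩ :=
    exists_mem_interior_inter_convexHull_support hKconvex hKcone ⟨v, hv⟩ hid hH1 hmK
  obtain ⟨t, n, htS, hk, htK⟩ := exists_sum_nsmul_mem_of_mem_convexHull isOpen_interior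
    (fun _ ht _ hx => smul_mem_interior_of_cone hKcone ht hx) hpK hpS
  obtain ⟨c, hct, hc⟩ := t.exists_seq_sum_range_eq_sum_nsmul n
  set k := ∑ y ∈ t, n y
  rw [← hc] at htK
  obtain ⟨ε, hε, hεK⟩ := exists_forall_dist_lt_sum_range_mem isOpen_interior htK
  obtain ⟨δ, hδ, hδK⟩ :=
    exists_closedBall_subset_image_add_smul_of_cone hKcone hv (∑ j ∈ range k, (‖c j‖ + ε))
  have hball : 0 < P (⋂ j ∈ range k, X j ⁻¹' ball (c j) ε) := by
    refine hXindep.measure_biInter_preimage_pos (fun _ _ => measurableSet_ball) fun j hj => ?_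
    rw [← Measure.map_apply (hXmeas j) measurableSet_ball, hXlaw j]
    exact (Measure.mem_support_iff_forall _).1 (htS (hct j (mem_range.1 hj))) _ (ball_mem_nhds _ hε)
  refine ⟨k, hk, δ, hδ, hball.trans_le (measure_mono fun ω hω => ?_)⟩
  simp only [Set.mem_iInter, Set.mem_preimage, mem_ball] at hω
  have hclose : ∀ j < k, dist (X j ω) (c j) < ε := fun j hj => hω j (mem_range.2 hj)
  exact ⟨fun j _ hjk => hδK (mem_closedBall_zero_iff.2 (norm_sum_range_le_of_dist_lt hclose hjk)),
    hεK _ hclose⟩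

/-- **Lemma (pushing the walk into the cone)**: if `μ` is square-integrable, satisfies (H1)
and its mean `m = ∫ y dμ(y)` lies in the closed convex cone `K` (with non-empty interior),
then there exist `k ≥ 1` and `δ ≥ 0` such that the walk started at `0` stays in
`K_{-δ} = K - δv` up to time `k` and lies in the interior of `K` at time `k` with positive
probability. -/
theorem walk_reaches_interior_with_positive_probability
    {d : ℕ} (hd : 1 ≤ d)
    (K : Set (EuclideanSpace ℝ (Fin d)))
    (hKclosed : IsClosed K) (hKconvex : Convex ℝ K)
    (hKcone : ∀ c : ℝ, 0 ≤ c → ∀ x ∈ K, c • x ∈ K)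
    (hKint : (interior K).Nonempty)
    (v : EuclideanSpace ℝ (Fin d)) (hv : v ∈ interior K)
    (μ : Measure (EuclideanSpace ℝ (Fin d))) [IsProbabilityMeasure μ]
    -- square integrability
    (hsq : Integrable (fun y : EuclideanSpace ℝ (Fin d) => ‖y‖ ^ 2) μ)
    -- (H1)
    (hH1 : ∀ u : EuclideanSpace ℝ (Fin d), u ≠ 0 → μ {y | ⟪u, y⟫ = 0} < 1)
    -- the drift belongs to K
    (hmK : (∫ y, y ∂μ) ∈ K)
    -- the random walk
    (Ω : Type) [MeasurableSpace Ω] (P : Measure Ω) [IsProbabilityMeasure P]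
    (X : ℕ → Ω → EuclideanSpace ℝ (Fin d))
    (hXmeas : ∀ n, Measurable (X n))
    (hXindep : iIndepFun X P)
    (hXlaw : ∀ n, Measure.map (X n) P = μ) :
    ∃ k : ℕ, 1 ≤ k ∧ ∃ δ : ℝ, 0 ≤ δ ∧
      0 < P {ω | (∀ j : ℕ, 1 ≤ j → j ≤ k →
            (∑ i ∈ Finset.range j, X i ω) ∈ (· + (-δ) • v) '' K) ∧
          (∑ i ∈ Finset.range k, X i ω) ∈ interior K} :=
  walk_reaches_interior_with_positive_probability_general K hKconvex hKcone v hv μ hsq hH1 hmK Ω P X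
    hXmeas hXindep hXlaw
end
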